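/- Let p be a prime and s a positive integer. Then p divides the denominator of the s-th Bernoulli number B_s (written in lowest terms) if and only if p - 1 divides 2s. -/

import Mathlib

/-!
By von Staudt–Clausen, `B_{2s} + ∑ 1/q` over the primes `q` with `q - 1 ∣ 2s` is an integer.
Every summand `1/q` with `q ≠ p` is `p`-integral while `1/p` is not, so `B_{2s}` fails to be
`p`-integral exactly when `p` occurs in the sum.
-/

open Finset

namespace Rat

variable {p : ℕ} [Fact p.Prime]

lemma mem_padicValuation_integer_iff {x : ℚ} :
    x ∈ (padicValuation p).integer ↔ ¬ p ∣ x.den :=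
  padicValuation_le_one_iff

lemma intCast_mem_padicValuation_integer (n : ℤ) : (n : ℚ) ∈ (padicValuation p).integer :=
  mem_padicValuation_integer_iff.mpr (by simp [Nat.Prime.ne_one Fact.out])

lemma one_div_prime_mem_padicValuation_integer {q : ℕ} (hq : q.Prime) (hqp : q ≠ p) :
    (1 / q : ℚ) ∈ (padicValuation p).integer := by
  rw [mem_padicValuation_integer_iff, one_div, inv_natCast_den_of_pos hq.pos]
  exact fun h ↦ hqp ((Nat.prime_dvd_prime_iff_eq Fact.out hq).mp h).symm

lemma one_div_self_notMem_padicValuation_integer :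
    (1 / p : ℚ) ∉ (padicValuation p).integer := by
  rw [mem_padicValuation_integer_iff, one_div, inv_natCast_den_of_pos (Nat.Prime.pos Fact.out)]
  exact not_not.mpr dvd_rfl

lemma sum_one_div_primes_mem_padicValuation_integer_iff {S : Finset ℕ} (hS : ∀ q ∈ S, q.Prime) :
    ∑ q ∈ S, (1 / q : ℚ) ∈ (padicValuation p).integer ↔ p ∉ S := by
  have hrest : ∑ q ∈ S.erase p, (1 / q : ℚ) ∈ (padicValuation p).integer :=
    sum_mem fun q hq ↦ one_div_prime_mem_padicValuation_integer
      (hS q (mem_of_mem_erase hq)) (ne_of_mem_erase hq)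
  by_cases hpS : p ∈ S
  · rw [← add_sum_erase S _ hpS, add_mem_cancel_right hrest]
    simpa [hpS] using one_div_self_notMem_padicValuation_integer
  · simpa [hpS, erase_eq_of_notMem hpS] using hrest

end Rat

/-- Von Staudt–Clausen characterization: a prime `p` divides the denominator of the
`s`-th Bernoulli number (classical even index `B_{2s}`, i.e. the convention
`z/(e^z-1) = 1 - z/2 - ∑_{s≥1} B_s z^{2s}/(2s)!`) if and only if `p - 1` divides `2s`. -/
theorem prime_dvd_bernoulli_den_iff (p : ℕ) (hp : p.Prime) (s : ℕ) (hs : 0 < s) :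
    p ∣ (bernoulli (2 * s)).den ↔ (p - 1) ∣ 2 * s := by
  have : Fact p.Prime := ⟨hp⟩
  set S := (range (2 * s + 2)).filter fun q ↦ q.Prime ∧ (q - 1) ∣ 2 * s
  obtain ⟨N, hN⟩ := Bernoulli.vonStaudt_clausen s
  have hB : bernoulli (2 * s) = N - ∑ q ∈ S, (1 / q : ℚ) := by rw [hN]; ring
  have hpS : p ∈ S ↔ (p - 1) ∣ 2 * s := by
    simp only [S, mem_filter, mem_range, hp, true_and, and_iff_right_iff_imp]
    intro h
    have := Nat.le_of_dvd (by omega) h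
    omega
  rw [← not_iff_not, ← Rat.mem_padicValuation_integer_iff, hB,
    sub_eq_add_neg, add_mem_cancel_left (Rat.intCast_mem_padicValuation_integer N), neg_mem_iff,
    Rat.sum_one_div_primes_mem_padicValuation_integer_iff fun q hq ↦ (mem_filter.mp hq).2.1, hpS]
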